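/- arXiv:2205.04573 — 3 statements merged into one kernel-verified Lean document; each statement's English description precedes it below -/
import Mathlib

section
/- Let Ω be a compact metrizable space, let 𝒫 ⊆ Δ(Ω) be a nonempty compact convex set of Borel probability measures, let 𝒫' ⊆ 𝒫 be a nonempty closed convex subset, and let P* ∈ Δ(Ω). Then P* ∈ 𝒫' if and only if for every act f : Ω → [0,1] and every real number x, inf_{P ∈ 𝒫'} ∫ f dP > x implies ∫ f dP* > x. (This is the characterization that the data-driven decision objectively dominates the data-free decision across all basic decision problems — binary choices between an uncertain act f and a constant act x — if and only if the updated set accommodates the true DGP.) -/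
/-!
If `P* ∉ Q`, closedness of `Q` in the weak topology produces finitely many bounded
continuous test functions whose vector of integrals keeps `P*` away from the closure of the
image of `Q` in `ℝⁿ`. That image is convex, so Hahn–Banach in `ℝⁿ` yields one bounded
continuous `G` with `∫ G dP* < v < ∫ G dP` for all `P ∈ Q`, and an increasing affine
rescaling of `G` into `[0, 1]` is an act whose maxmin value under `Q` exceeds its
`P*`-expectation.
-/

open MeasureTheory Set
open scoped NNReal

/-- The maxmin expected-utility (MEU) value of an act `f` under a set `Q` of
probability measures: `inf_{P ∈ Q} ∫ f dP`. -/
noncomputable def MEU {Ω : Type*} [MeasurableSpace Ω]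
    (Q : Set (ProbabilityMeasure Ω)) (f : Ω → ℝ) : ℝ :=
  sInf ((fun P : ProbabilityMeasure Ω => ∫ ω, f ω ∂(P : Measure Ω)) '' Q)

open BoundedContinuousFunction Filter Topology

section MEU

variable {Ω : Type*} [MeasurableSpace Ω] {Q : Set (ProbabilityMeasure Ω)} {f : Ω → ℝ}

theorem MEU_le_integral (hf : 0 ≤ f) {P : ProbabilityMeasure Ω} (hP : P ∈ Q) :
    MEU Q f ≤ ∫ ω, f ω ∂(P : Measure Ω) :=
  csInf_le ⟨0, by rintro _ ⟨R, -, rfl⟩; exact integral_nonneg hf⟩ ⟨P, hP, rfl⟩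

theorem le_MEU (hQ : Q.Nonempty) {x : ℝ}
    (h : ∀ P ∈ Q, x ≤ ∫ ω, f ω ∂(P : Measure Ω)) : x ≤ MEU Q f :=
  le_csInf (hQ.image _) (by rintro _ ⟨P, hP, rfl⟩; exact h P hP)

end MEU

namespace BoundedContinuousFunction

theorem exists_affine_mem_Icc {Ω : Type*} [TopologicalSpace Ω] (G : Ω →ᵇ ℝ) :
    ∃ a b : ℝ, 0 < a ∧ ∀ ω, a * G ω + b ∈ Icc (0 : ℝ) 1 := by
  refine ⟨(2 * ‖G‖ + 1)⁻¹, ‖G‖ * (2 * ‖G‖ + 1)⁻¹, by positivity, fun ω => ?_⟩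
  obtain ⟨hlo, hhi⟩ := abs_le.mp (Real.norm_eq_abs _ ▸ G.norm_coe_le_norm ω)
  rw [mul_comm, ← add_mul, ← div_eq_mul_inv]
  constructor
  · apply div_nonneg <;> linarith [norm_nonneg G]
  · rw [div_le_one (by positivity)]; linarith

variable {Ω : Type*} [MeasurableSpace Ω] [TopologicalSpace Ω] [OpensMeasurableSpace Ω]

theorem exists_integral_eq_continuousLinearMap {ι : Type*} [Fintype ι] (g : ι → Ω →ᵇ ℝ)
    (L : (ι → ℝ) →L[ℝ] ℝ) :
    ∃ G : Ω →ᵇ ℝ, ∀ (μ : Measure Ω) [IsFiniteMeasure μ],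
      ∫ ω, G ω ∂μ = L fun i => ∫ ω, g i ω ∂μ := by
  classical
  refine ⟨∑ i, L (fun j => if i = j then 1 else 0) • g i, fun μ _ => ?_⟩
  rw [← L.coe_coe, L.toLinearMap.pi_apply_eq_sum_univ]
  simp only [coe_sum, coe_smul, Finset.sum_apply, smul_eq_mul]
  rw [integral_finsetSum _ fun i _ => ((g i).integrable μ).const_mul _]
  simp only [integral_const_mul]
  exact Finset.sum_congr rfl fun i _ => mul_comm _ _

end BoundedContinuousFunction

namespace MeasureTheory.ProbabilityMeasure

variable {Ω : Type*} [MeasurableSpace Ω] [TopologicalSpace Ω]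

noncomputable def testIntegrals {ι : Type*} (g : ι → Ω →ᵇ ℝ) (μ : ProbabilityMeasure Ω) :
    ι → ℝ :=
  fun i => ∫ ω, g i ω ∂(μ : Measure Ω)

variable [OpensMeasurableSpace Ω]

theorem isInducing_testIntegrals_id : IsInducing (testIntegrals (Ω := Ω) id) := by
  have hcont : Continuous (testIntegrals (Ω := Ω) id) :=
    _root_.continuous_pi fun g => continuous_integral_boundedContinuousFunction g
  refine isInducing_iff_nhds.2 fun μ => le_antisymm (hcont.tendsto μ).le_comap ?_
  refine tendsto_id'.1 (tendsto_iff_forall_integral_tendsto.2 fun g => ?_)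
  exact ((continuous_apply (A := fun _ : Ω →ᵇ ℝ => ℝ) g).tendsto _).comp tendsto_comap

theorem convex_testIntegrals_image {ι : Type*} (g : ι → Ω →ᵇ ℝ)
    {Q : Set (ProbabilityMeasure Ω)} (hQ : Convex ℝ≥0 (toMeasure '' Q)) :
    Convex ℝ (testIntegrals g '' Q) := by
  rintro _ ⟨μ₁, h₁, rfl⟩ _ ⟨μ₂, h₂, rfl⟩ a b ha hb hab
  obtain ⟨ν, hν, hνeq⟩ := hQ ⟨μ₁, h₁, rfl⟩ ⟨μ₂, h₂, rfl⟩ bot_le bot_le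
    (by rw [← Real.toNNReal_add ha hb, hab, Real.toNNReal_one])
  refine ⟨ν, hν, funext fun i => ?_⟩
  change ∫ ω, g i ω ∂(ν : Measure Ω) =
    a * ∫ ω, g i ω ∂(μ₁ : Measure Ω) + b * ∫ ω, g i ω ∂(μ₂ : Measure Ω)
  rw [hνeq, integral_add_measure ((g i).integrable _) ((g i).integrable _),
    integral_smul_nnreal_measure, integral_smul_nnreal_measure]
  simp [NNReal.smul_def, Real.coe_toNNReal a ha, Real.coe_toNNReal b hb]

theorem exists_finset_notMem_closure_testIntegrals_image {Q : Set (ProbabilityMeasure Ω)}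
    (hQ : IsClosed Q) {μ : ProbabilityMeasure Ω} (hμ : μ ∉ Q) :
    ∃ I : Finset (Ω →ᵇ ℝ),
      testIntegrals (↑) μ ∉ closure (testIntegrals ((↑) : I → Ω →ᵇ ℝ) '' Q) := by
  obtain ⟨V, hVo, hV⟩ := isInducing_testIntegrals_id.isOpen_iff.1 hQ.isOpen_compl
  obtain ⟨I, u, hu, huV⟩ := isOpen_pi_iff.1 hVo _ (by rw [← mem_preimage, hV]; exact hμ)
  have hUo : IsOpen ((univ : Set I).pi fun i => u i) :=
    isOpen_set_pi finite_univ fun i _ => (hu i i.2).1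
  refine ⟨I, fun hcl => closure_minimal ?_ hUo.isClosed_compl hcl fun i _ => (hu i i.2).2⟩
  rintro _ ⟨ν, hν, rfl⟩ hνU
  have hνV : testIntegrals id ν ∈ V := huV fun i hi => hνU ⟨i, hi⟩ trivial
  exact (hV ▸ hνV : ν ∈ Qᶜ) hν

theorem exists_separating_integral_of_notMem {Q : Set (ProbabilityMeasure Ω)} (hQcl : IsClosed Q)
    (hQconv : Convex ℝ≥0 (toMeasure '' Q)) {μ : ProbabilityMeasure Ω} (hμ : μ ∉ Q) :
    ∃ (G : Ω →ᵇ ℝ) (v : ℝ), ∫ ω, G ω ∂(μ : Measure Ω) < v ∧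
      ∀ ν ∈ Q, v < ∫ ω, G ω ∂(ν : Measure Ω) := by
  obtain ⟨I, hI⟩ := exists_finset_notMem_closure_testIntegrals_image hQcl hμ
  obtain ⟨L, v, hμL, hQL⟩ := geometric_hahn_banach_point_closed
    (convex_testIntegrals_image _ hQconv).closure isClosed_closure hI
  obtain ⟨G, hG⟩ := exists_integral_eq_continuousLinearMap ((↑) : I → Ω →ᵇ ℝ) L
  exact ⟨G, v, (hG μ).symm ▸ hμL,
    fun ν hν => (hG ν).symm ▸ hQL _ (subset_closure ⟨ν, hν, rfl⟩)⟩

theorem exists_act_MEU_gt_integral {Q : Set (ProbabilityMeasure Ω)} (hQne : Q.Nonempty)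
    (hQcl : IsClosed Q) (hQconv : Convex ℝ≥0 (toMeasure '' Q)) {μ : ProbabilityMeasure Ω}
    (hμ : μ ∉ Q) :
    ∃ f : Ω → ℝ, Measurable f ∧ (∀ ω, f ω ∈ Icc (0 : ℝ) 1) ∧
      ∫ ω, f ω ∂(μ : Measure Ω) < MEU Q f := by
  obtain ⟨G, v, hμG, hQG⟩ := exists_separating_integral_of_notMem hQcl hQconv hμ
  obtain ⟨a, b, ha, hab⟩ := G.exists_affine_mem_Icc
  have hint : ∀ ν : ProbabilityMeasure Ω,
      ∫ ω, a * G ω + b ∂(ν : Measure Ω) = a * ∫ ω, G ω ∂(ν : Measure Ω) + b := by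
    intro ν
    rw [integral_add ((G.integrable _).const_mul a) (integrable_const b), integral_const_mul]
    simp
  refine ⟨fun ω => a * G ω + b, (G.continuous.measurable.const_mul a).add_const b, hab, ?_⟩
  calc ∫ ω, a * G ω + b ∂(μ : Measure Ω) < a * v + b := by rw [hint]; gcongr
    _ ≤ MEU Q _ := le_MEU hQne fun ν hν => by rw [hint]; gcongr; exact (hQG ν hν).le

end MeasureTheory.ProbabilityMeasure

theorem accommodates_iff_dominates_basic_general
    {Ω : Type*} [MeasurableSpace Ω] [TopologicalSpace Ω] [BorelSpace Ω]
    (Q : Set (ProbabilityMeasure Ω))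
    (hQne : Q.Nonempty) (hQcl : IsClosed Q)
    (hQconv : Convex ℝ≥0 (ProbabilityMeasure.toMeasure '' Q))
    (Pstar : ProbabilityMeasure Ω) :
    Pstar ∈ Q ↔
      ∀ f : Ω → ℝ, Measurable f → (∀ ω, f ω ∈ Icc (0 : ℝ) 1) →
        ∀ x : ℝ, MEU Q f > x → (∫ ω, f ω ∂(Pstar : Measure Ω)) > x := by
  refine ⟨fun hP f _ hf x hx => hx.trans_le (MEU_le_integral (fun ω => (hf ω).1) hP),
    fun h => ?_⟩
  by_contra hP
  obtain ⟨f, hfm, hf, hlt⟩ := ProbabilityMeasure.exists_act_MEU_gt_integral hQne hQcl hQconv hP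
  exact (h f hfm hf _ hlt).false

/-- **Theorem 1 (Basic decision problems).**  `P* ∈ Q` iff for every act
`f : Ω → [0,1]` and every real `x`, `inf_{P ∈ Q} ∫ f dP > x` implies
`∫ f dP* > x`. -/
theorem accommodates_iff_dominates_basic
    {Ω : Type*} [MeasurableSpace Ω] [TopologicalSpace Ω] [BorelSpace Ω]
    [CompactSpace Ω] [TopologicalSpace.MetrizableSpace Ω]
    (P Q : Set (ProbabilityMeasure Ω))
    (hPne : P.Nonempty) (hPcpt : IsCompact P)
    (hPconv : Convex ℝ≥0 (ProbabilityMeasure.toMeasure '' P))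
    (hQne : Q.Nonempty) (hQsub : Q ⊆ P) (hQcl : IsClosed Q)
    (hQconv : Convex ℝ≥0 (ProbabilityMeasure.toMeasure '' Q))
    (Pstar : ProbabilityMeasure Ω) :
    Pstar ∈ Q ↔
      ∀ f : Ω → ℝ, Measurable f → (∀ ω, f ω ∈ Icc (0 : ℝ) 1) →
        ∀ x : ℝ, MEU Q f > x → (∫ ω, f ω ∂(Pstar : Measure Ω)) > x :=
  accommodates_iff_dominates_basic_general Q hQne hQcl hQconv Pstar
end

section
/- Let S be a finite nonempty set and let P = ⊗_{i ∈ ℕ} μ_i be an infinite product probability measure on Ω = S^ℕ with marginals μ_i on S. Fix ε > 0 and, for sample data ω_N (the first N coordinates of ω), define the average-then-update updated set 𝒫(ω_N) = { Q ∈ 𝒫 : max_{s ∈ S} |Q̄_N(s) − Φ(ω_N)(s)| < ε }, where 𝒫 is any set of product probability measures on S^ℕ containing P, Q̄_N is the average of the first N marginals of Q, and Φ(ω_N) is the empirical distribution. Then for P-almost every ω there exists N̄(ω) such that for all N ≥ N̄(ω), P ∈ 𝒫(ω_N); i.e., the updated sets given by average-then-update accommodate the truth asymptotically almost surely. -/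
/-!
For a fixed outcome `s`, the indicators `1{ω i = s}` are independent and `[0, 1]`-valued with
means `μ i {s}`. By Hoeffding's inequality the probability that their centred partial sum up to
`N` exceeds `δ N` is at most `2 q ^ N` for some `q < 1`; this is summable, so by Borel–Cantelli,
almost surely the empirical frequency of `s` is eventually within `δ` of the averaged marginal
`N⁻¹ ∑ μ i {s}`. As `S` is finite, this holds almost surely for all `s` at once.
-/

open MeasureTheory Filter ProbabilityTheory Real Finset
open scoped NNReal

namespace ProbabilityTheory

variable {Ω : Type*} {mΩ : MeasurableSpace Ω} {μ : Measure Ω}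

lemma HasSubgaussianMGF.mono {X : Ω → ℝ} {c c' : ℝ≥0} (h : HasSubgaussianMGF X c μ)
    (hc : c ≤ c') : HasSubgaussianMGF X c' μ :=
  ⟨h.integrable_exp_mul, fun t => (h.mgf_le t).trans (exp_le_exp.2 (by gcongr))⟩

lemma HasSubgaussianMGF.measure_abs_sum_range_ge_le_of_iIndepFun [IsFiniteMeasure μ]
    {X : ℕ → Ω → ℝ} (h_indep : iIndepFun X μ) {c : ℝ≥0} {n : ℕ}
    (h_subG : ∀ i < n, HasSubgaussianMGF (X i) c μ) {t : ℝ} (ht : 0 ≤ t) :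
    μ.real {ω | t ≤ |∑ i ∈ range n, X i ω|} ≤ 2 * exp (-t ^ 2 / (2 * n * c)) := by
  have h_upper := HasSubgaussianMGF.measure_sum_range_ge_le_of_iIndepFun h_indep h_subG ht
  have h_lower := HasSubgaussianMGF.measure_sum_range_ge_le_of_iIndepFun (X := fun i => -X i)
    (h_indep.comp (fun _ => Neg.neg) fun _ => measurable_neg) (fun i hi => (h_subG i hi).neg) ht
  have h_split : {ω | t ≤ |∑ i ∈ range n, X i ω|}
      ⊆ {ω | t ≤ ∑ i ∈ range n, X i ω} ∪ {ω | t ≤ ∑ i ∈ range n, (-X i) ω} := by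
    intro ω hω
    simp only [Set.mem_ofPred_eq, Set.mem_union, Pi.neg_apply, sum_neg_distrib] at hω ⊢
    rcases le_abs'.1 hω with h | h
    · exact .inr (le_neg.1 h)
    · exact .inl h
  calc μ.real {ω | t ≤ |∑ i ∈ range n, X i ω|}
      ≤ μ.real {ω | t ≤ ∑ i ∈ range n, X i ω} + μ.real {ω | t ≤ ∑ i ∈ range n, (-X i) ω} :=
        (measureReal_mono h_split).trans (measureReal_union_le _ _)
    _ ≤ _ := by linarith

lemma ae_eventually_abs_sum_range_lt_of_iIndepFun [IsFiniteMeasure μ] {X : ℕ → Ω → ℝ}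
    (h_indep : iIndepFun X μ) {c : ℝ≥0} (h_subG : ∀ i, HasSubgaussianMGF (X i) c μ)
    {δ : ℝ} (hδ : 0 < δ) :
    ∀ᵐ ω ∂μ, ∀ᶠ n : ℕ in atTop, |∑ i ∈ range n, X i ω| < δ * n := by
  -- Hoeffding with `c + 1` in place of `c`: for `c = 0` the exponent would be `-t ^ 2 / 0 = 0`.
  set q := exp (-δ ^ 2 / (2 * (c + 1)))
  have hq : q < 1 := exp_lt_one_iff.2 (div_neg_of_neg_of_pos (by nlinarith) (by positivity))
  have h_tail (n : ℕ) : μ.real {ω | δ * n ≤ |∑ i ∈ range n, X i ω|} ≤ 2 * q ^ n := by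
    refine (HasSubgaussianMGF.measure_abs_sum_range_ge_le_of_iIndepFun h_indep
      (fun i _ => (h_subG i).mono (le_add_of_nonneg_right zero_le_one)) (by positivity)).trans_eq ?_
    rw [← exp_nat_mul]
    rcases n.eq_zero_or_pos with rfl | hn
    · simp
    · push_cast
      field_simp
  have h_summable : Summable fun n : ℕ => 2 * q ^ n :=
    (summable_geometric_of_lt_one (exp_nonneg _) hq).mul_left 2
  have h_tsum : ∑' n : ℕ, μ {ω | δ * n ≤ |∑ i ∈ range n, X i ω|} ≠ ⊤ := by
    refine ne_top_of_le_ne_top ?_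
      (ENNReal.tsum_le_tsum (g := fun n => ENNReal.ofReal (2 * q ^ n)) fun n => ?_)
    · rw [← ENNReal.ofReal_tsum_of_nonneg (fun n => by positivity) h_summable]
      exact ENNReal.ofReal_ne_top
    · rw [← ofReal_measureReal]
      exact ENNReal.ofReal_le_ofReal (h_tail n)
  filter_upwards [ae_eventually_notMem h_tsum] with ω hω
  filter_upwards [hω] with n hn
  simpa using hn

lemma ae_eventually_abs_average_sub_integral_lt [IsProbabilityMeasure μ] {X : ℕ → Ω → ℝ}
    (h_indep : iIndepFun X μ) (hX : ∀ i, AEMeasurable (X i) μ) {a b : ℝ}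
    (h_bdd : ∀ i, ∀ᵐ ω ∂μ, X i ω ∈ Set.Icc a b) {δ : ℝ} (hδ : 0 < δ) :
    ∀ᵐ ω ∂μ, ∀ᶠ n : ℕ in atTop, |(n : ℝ)⁻¹ * ∑ i ∈ range n, (X i ω - μ[X i])| < δ := by
  have h_centered : iIndepFun (fun i ω => X i ω - μ[X i]) μ :=
    h_indep.comp (g := fun i (x : ℝ) => x - ∫ ω, X i ω ∂μ) fun _ => measurable_id.sub_const _
  filter_upwards [ae_eventually_abs_sum_range_lt_of_iIndepFun h_centered
    (fun i => hasSubgaussianMGF_of_mem_Icc (hX i) (h_bdd i)) hδ] with ω hω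
  filter_upwards [hω, eventually_gt_atTop 0] with n hn hn_pos
  rw [abs_mul, abs_inv, Nat.abs_cast, inv_mul_lt_iff₀ (by positivity), mul_comm]
  exact hn

lemma integral_ite_eq_one_eq_measureReal_map {S : Type*} [MeasurableSpace S]
    [MeasurableSingletonClass S] [DecidableEq S] {X : Ω → S} (hX : Measurable X) (s : S) :
    ∫ ω, (if X ω = s then (1 : ℝ) else 0) ∂μ = (μ.map X).real {s} := by
  have h_ind : (fun ω => if X ω = s then (1 : ℝ) else 0) = (X ⁻¹' {s}).indicator 1 := by
    funext ω
    by_cases h : X ω = s <;> simp [h]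
  rw [h_ind, integral_indicator_one (hX (measurableSet_singleton s)),
    map_measureReal_apply hX (measurableSet_singleton s)]

end ProbabilityTheory

theorem average_then_update_accommodates_truth_general
    {S : Type*} [Fintype S] [DecidableEq S] [MeasurableSpace S]
    [MeasurableSingletonClass S]
    (μ : ℕ → Measure S)
    (P : Measure (ℕ → S)) (hP : IsProbabilityMeasure P)
    (hmarg : ∀ i, P.map (fun ω => ω i) = μ i)
    (hindep : ProbabilityTheory.iIndepFun
      (fun i (ω : ℕ → S) => ω i) P)
    (PP : Set (ℕ → Measure S))
    (hμPP : μ ∈ PP)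
    (ε : ℝ) (hε : 0 < ε) :
    ∀ᵐ ω ∂P, ∃ N0 : ℕ, ∀ N ≥ N0,
      μ ∈ {ν ∈ PP |
        (⨆ s : S,
          |(N : ℝ)⁻¹ * ∑ i ∈ Finset.range N, (ν i {s}).toReal
            - (N : ℝ)⁻¹ * ∑ i ∈ Finset.range N, (if ω i = s then (1 : ℝ) else 0)|)
          < ε} := by
  have h_coord (s : S) : ∀ᵐ ω ∂P, ∀ᶠ N : ℕ in atTop,
      |(N : ℝ)⁻¹ * ∑ i ∈ range N, (μ i {s}).toReal
        - (N : ℝ)⁻¹ * ∑ i ∈ range N, (if ω i = s then (1 : ℝ) else 0)| < ε / 2 := by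
    have h_ind : Measurable fun x : S => if x = s then (1 : ℝ) else 0 :=
      measurable_const.ite (measurableSet_singleton s) measurable_const
    filter_upwards [ae_eventually_abs_average_sub_integral_lt (a := 0) (b := 1)
      (hindep.comp (fun _ x => if x = s then (1 : ℝ) else 0) fun _ => h_ind)
      (fun i => (h_ind.comp (measurable_pi_apply i)).aemeasurable)
      (fun i => ae_of_all _ fun ω => by by_cases h : ω i = s <;> simp [h]) (half_pos hε)]
      with ω hω
    filter_upwards [hω] with N hN
    simp only [Function.comp_apply, integral_ite_eq_one_eq_measureReal_map (measurable_pi_apply _),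
      hmarg] at hN
    rwa [abs_sub_comm, ← mul_sub, ← sum_sub_distrib]
  filter_upwards [ae_all_iff.2 h_coord] with ω hω
  obtain ⟨N0, hN0⟩ := eventually_atTop.1 (eventually_all.2 hω)
  refine ⟨N0, fun N hN => ⟨hμPP, ?_⟩⟩
  -- `Real.iSup_le` only gives a non-strict bound on the supremum, hence the margin `ε / 2`.
  exact (Real.iSup_le (fun s => (hN0 N hN s).le) (half_pos hε).le).trans_lt (half_lt_self hε)

/-- **Theorem 4 (average-then-update accommodates the truth asymptotically
almost surely).** A DGP is represented by its sequence of marginals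
`ν : ℕ → Measure S`; the initial set `PP` is any set of such DGPs containing
the true one `μ`, whose joint law on `S^ℕ` is `P` (independent coordinates
with marginals `μ i`).  For the average-then-update rule with tolerance
`ε > 0`, `P`-almost surely the true DGP `μ` eventually belongs to every
updated set. -/
theorem average_then_update_accommodates_truth
    {S : Type*} [Fintype S] [Nonempty S] [DecidableEq S] [MeasurableSpace S]
    [MeasurableSingletonClass S]
    (μ : ℕ → Measure S) (hμ : ∀ i, IsProbabilityMeasure (μ i))
    (P : Measure (ℕ → S)) (hP : IsProbabilityMeasure P)
    (hmarg : ∀ i, P.map (fun ω => ω i) = μ i)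
    (hindep : ProbabilityTheory.iIndepFun
      (fun i (ω : ℕ → S) => ω i) P)
    (PP : Set (ℕ → Measure S)) (hPPprob : ∀ ν ∈ PP, ∀ i, IsProbabilityMeasure (ν i))
    (hμPP : μ ∈ PP)
    (ε : ℝ) (hε : 0 < ε) :
    ∀ᵐ ω ∂P, ∃ N0 : ℕ, ∀ N ≥ N0,
      μ ∈ {ν ∈ PP |
        (⨆ s : S,
          |(N : ℝ)⁻¹ * ∑ i ∈ Finset.range N, (ν i {s}).toReal
            - (N : ℝ)⁻¹ * ∑ i ∈ Finset.range N, (if ω i = s then (1 : ℝ) else 0)|)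
          < ε} :=
  average_then_update_accommodates_truth_general μ P hP hmarg hindep PP hμPP ε hε
end

section
/- Let d ≥ 2, N ≥ 1, and let p_1, …, p_N ∈ ℝ^{d−1} be vectors with strictly positive entries whose coordinates sum to strictly less than 1 (full-support marginal probability vectors over the first d−1 of d outcomes). For such a vector p, let Σ(p) = diag(p) − p pᵀ. Let Σ̄ = N⁻¹ Σ_{i=1}^N Σ(p_i) and Σ̂ = Σ(p̄) where p̄ = N⁻¹ Σ_{i=1}^N p_i; then Σ̄ and Σ̂ are positive definite, and for every x ∈ ℝ^{d−1} one has xᵀ Σ̂⁻¹ x ≤ xᵀ Σ̄⁻¹ x. Consequently, for every c ∈ ℝ, the ellipsoid { x : xᵀ Σ̄⁻¹ x ≤ c } is contained in the ellipsoid { x : xᵀ Σ̂⁻¹ x ≤ c }; i.e., the Gaussian probability contour corresponding to the non-identical sequence is contained in the contour corresponding to the i.i.d. sequence with the same average marginal. -/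
/-!
For full-support `p` the quadratic form `xᵀ Σ(p) x = ∑ pₖ xₖ² - (∑ pₖ xₖ)²` is positive, since
weighted Cauchy–Schwarz gives `(∑ pₖ xₖ)² ≤ (∑ pₖ) (∑ pₖ xₖ²)` and `∑ pₖ < 1`. The same
inequality with weights summing to one shows that `p ↦ Σ(p)` is concave in the Loewner order,
so `Σ̄ ≤ Σ̂`. Inversion reverses the Loewner order on positive definite matrices, because
`xᵀ A⁻¹ x = max_y (2 xᵀ y - yᵀ A y)`; hence `xᵀ Σ̂⁻¹ x ≤ xᵀ Σ̄⁻¹ x`.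
-/

open Matrix

/-- The multinomial covariance matrix `Σ(p) = diag(p) − p pᵀ` associated with a
marginal probability vector `p` over the first `d − 1` of `d` outcomes. -/
noncomputable def multinomialCov {ι : Type*} [Fintype ι] [DecidableEq ι]
    (p : ι → ℝ) : Matrix ι ι ℝ :=
  Matrix.diagonal p - Matrix.vecMulVec p p

open Finset

lemma Finset.sq_sum_mul_le_sum_mul_sum_mul_sq {κ : Type*} (s : Finset κ) {w : κ → ℝ}
    (hw : ∀ i ∈ s, 0 ≤ w i) (f : κ → ℝ) :
    (∑ i ∈ s, w i * f i) ^ 2 ≤ (∑ i ∈ s, w i) * ∑ i ∈ s, w i * f i ^ 2 :=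
  sum_sq_le_sum_mul_sum_of_sq_le_mul s hw (fun i hi => mul_nonneg (hw i hi) (sq_nonneg _))
    fun i _ => by rw [mul_pow, sq (w i), mul_assoc]

namespace Matrix

variable {ι : Type*} [Fintype ι] [DecidableEq ι]

lemma PosDef.two_mul_dotProduct_sub_le_dotProduct_inv_mulVec
    {A : Matrix ι ι ℝ} (hA : A.PosDef) (x y : ι → ℝ) :
    2 * (x ⬝ᵥ y) - y ⬝ᵥ (A *ᵥ y) ≤ x ⬝ᵥ (A⁻¹ *ᵥ x) := by
  set w := A⁻¹ *ᵥ x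
  have hAw : A *ᵥ w = x := by
    rw [mulVec_mulVec, mul_nonsing_inv _ (isUnit_iff_isUnit_det _ |>.mp hA.isUnit), one_mulVec]
  have hsymm : w ⬝ᵥ (A *ᵥ y) = x ⬝ᵥ y := by
    rw [dotProduct_mulVec, ← mulVec_transpose, (isHermitian_iff_isSymm.mp hA.isHermitian).eq, hAw]
  have hsquare := hA.posSemidef.dotProduct_mulVec_nonneg (y - w)
  rw [star_trivial, mulVec_sub, dotProduct_sub, sub_dotProduct, sub_dotProduct, hAw, hsymm,
    dotProduct_comm y x, dotProduct_comm w x] at hsquare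
  linarith

lemma PosDef.dotProduct_inv_mulVec_le_of_dotProduct_mulVec_le
    {A B : Matrix ι ι ℝ} (hA : A.PosDef) (hB : IsUnit B)
    (hAB : ∀ y, y ⬝ᵥ (A *ᵥ y) ≤ y ⬝ᵥ (B *ᵥ y)) (x : ι → ℝ) :
    x ⬝ᵥ (B⁻¹ *ᵥ x) ≤ x ⬝ᵥ (A⁻¹ *ᵥ x) := by
  set y := B⁻¹ *ᵥ x
  have hBy : B *ᵥ y = x := by
    rw [mulVec_mulVec, mul_nonsing_inv _ (isUnit_iff_isUnit_det _ |>.mp hB), one_mulVec]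
  have hvar := hA.two_mul_dotProduct_sub_le_dotProduct_inv_mulVec x y
  have hy := hAB y
  rw [hBy, dotProduct_comm y x] at hy
  linarith

end Matrix

section MultinomialCov

variable {ι : Type*} [Fintype ι]

variable (ι) in
def fullSupportMarginals : Set (ι → ℝ) := {p | (∀ k, 0 < p k) ∧ ∑ k, p k < 1}

lemma convex_fullSupportMarginals : Convex ℝ (fullSupportMarginals ι) := by
  have hinter : fullSupportMarginals ι = (⋂ k, {p | 0 < p k}) ∩ {p | ∑ k, p k < 1} := by
    ext; simp [fullSupportMarginals]
  rw [hinter]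
  refine (convex_iInter fun k => convex_halfSpace_gt (LinearMap.proj k).isLinear 0).inter ?_
  simpa using convex_halfSpace_lt (∑ k, LinearMap.proj (R := ℝ) (φ := fun _ : ι => ℝ) k).isLinear 1

variable [DecidableEq ι]

lemma dotProduct_multinomialCov_mulVec (p x : ι → ℝ) :
    x ⬝ᵥ (multinomialCov p *ᵥ x) = p ⬝ᵥ (x ^ 2) - (p ⬝ᵥ x) ^ 2 := by
  simp only [multinomialCov, sub_mulVec, dotProduct_sub, vecMulVec_mulVec, dotProduct_smul]
  rw [op_smul_eq_mul, dotProduct_comm x p, ← sq]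
  congr 1
  simp only [dotProduct, mulVec_diagonal, Pi.pow_apply]
  exact sum_congr rfl fun k _ => by ring

lemma isHermitian_multinomialCov (p : ι → ℝ) : (multinomialCov p).IsHermitian :=
  (isHermitian_diagonal p).sub <| by simpa using (posSemidef_vecMulVec_self_star p).isHermitian

lemma posDef_multinomialCov {p : ι → ℝ} (hp : p ∈ fullSupportMarginals ι) :
    (multinomialCov p).PosDef := by
  obtain ⟨hpos, hsum⟩ := hp
  refine .of_dotProduct_mulVec_pos (isHermitian_multinomialCov p) fun x hx => ?_
  obtain ⟨k, hk⟩ := Function.ne_iff.mp hx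
  have hmass : 0 < ∑ k, p k * x k ^ 2 :=
    sum_pos' (fun k _ => mul_nonneg (hpos k).le (sq_nonneg _))
      ⟨k, mem_univ k, mul_pos (hpos k) (sq_pos_of_ne_zero hk)⟩
  have hCS := sq_sum_mul_le_sum_mul_sum_mul_sq univ (fun k _ => (hpos k).le) x
  rw [star_trivial, dotProduct_multinomialCov_mulVec]
  simp only [dotProduct, Pi.pow_apply]
  nlinarith

lemma dotProduct_sum_smul_multinomialCov_mulVec_le {κ : Type*} (s : Finset κ) {w : κ → ℝ}
    (hw0 : ∀ i ∈ s, 0 ≤ w i) (hw1 : ∑ i ∈ s, w i = 1) (p : κ → ι → ℝ) (x : ι → ℝ) :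
    x ⬝ᵥ ((∑ i ∈ s, w i • multinomialCov (p i)) *ᵥ x)
      ≤ x ⬝ᵥ (multinomialCov (∑ i ∈ s, w i • p i) *ᵥ x) := by
  have hJensen := sq_sum_mul_le_sum_mul_sum_mul_sq s hw0 (fun i => p i ⬝ᵥ x)
  rw [hw1, one_mul] at hJensen
  simp only [sum_mulVec, smul_mulVec, dotProduct_sum, dotProduct_smul, smul_eq_mul,
    dotProduct_multinomialCov_mulVec, sum_dotProduct, smul_dotProduct, mul_sub, sum_sub_distrib]
  linarith

end MultinomialCov

theorem gaussian_contour_inclusion_general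
    (d N : ℕ) (hN : 1 ≤ N)
    (p : Fin N → Fin (d - 1) → ℝ)
    (hpos : ∀ i k, 0 < p i k)
    (hsum : ∀ i, (∑ k, p i k) < 1) :
    ((N : ℝ)⁻¹ • ∑ i, multinomialCov (p i)).PosDef ∧
    (multinomialCov ((N : ℝ)⁻¹ • ∑ i, p i)).PosDef ∧
    (∀ x : Fin (d - 1) → ℝ,
      x ⬝ᵥ ((multinomialCov ((N : ℝ)⁻¹ • ∑ i, p i))⁻¹ *ᵥ x)
        ≤ x ⬝ᵥ (((N : ℝ)⁻¹ • ∑ i, multinomialCov (p i))⁻¹ *ᵥ x)) ∧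
    (∀ c : ℝ,
      {x : Fin (d - 1) → ℝ |
          x ⬝ᵥ (((N : ℝ)⁻¹ • ∑ i, multinomialCov (p i))⁻¹ *ᵥ x) ≤ c}
        ⊆ {x : Fin (d - 1) → ℝ |
          x ⬝ᵥ ((multinomialCov ((N : ℝ)⁻¹ • ∑ i, p i))⁻¹ *ᵥ x) ≤ c}) := by
  have hNpos : (0 : ℝ) < N := by exact_mod_cast hN
  have hw0 : ∀ i ∈ (univ : Finset (Fin N)), 0 ≤ (N : ℝ)⁻¹ := fun _ _ => inv_nonneg.mpr hNpos.le
  have hw1 : ∑ _i : Fin N, (N : ℝ)⁻¹ = 1 := by simp [hNpos.ne']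
  have hp : ∀ i, p i ∈ fullSupportMarginals (Fin (d - 1)) := fun i => ⟨hpos i, hsum i⟩
  have hcovAvg : ((N : ℝ)⁻¹ • ∑ i, multinomialCov (p i)).PosDef :=
    (posDef_sum ⟨⟨0, hN⟩, mem_univ _⟩ fun i _ => posDef_multinomialCov (hp i)).smul
      (inv_pos.mpr hNpos)
  have hcovIid : (multinomialCov ((N : ℝ)⁻¹ • ∑ i, p i)).PosDef := by
    rw [smul_sum]
    exact posDef_multinomialCov (convex_fullSupportMarginals.sum_mem hw0 hw1 fun i _ => hp i)
  have hinv := hcovAvg.dotProduct_inv_mulVec_le_of_dotProduct_mulVec_le hcovIid.isUnit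
    fun y => by
      simpa only [smul_sum] using dotProduct_sum_smul_multinomialCov_mulVec_le univ hw0 hw1 p y
  exact ⟨hcovAvg, hcovIid, hinv, fun c x hx => (hinv x).trans hx⟩

/-- **Ellipsoid inclusion lemma.** For full-support marginals, both the average
covariance matrix `Σ̄` of the non-identical sequence and the covariance matrix
`Σ̂` of the i.i.d. sequence with the same average marginal are positive
definite, the quadratic form of `Σ̂⁻¹` is dominated by that of `Σ̄⁻¹`, and
hence each ellipsoid `{x : xᵀ Σ̄⁻¹ x ≤ c}` is contained in
`{x : xᵀ Σ̂⁻¹ x ≤ c}`. -/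
theorem gaussian_contour_inclusion
    (d N : ℕ) (hd : 2 ≤ d) (hN : 1 ≤ N)
    (p : Fin N → Fin (d - 1) → ℝ)
    (hpos : ∀ i k, 0 < p i k)
    (hsum : ∀ i, (∑ k, p i k) < 1) :
    ((N : ℝ)⁻¹ • ∑ i, multinomialCov (p i)).PosDef ∧
    (multinomialCov ((N : ℝ)⁻¹ • ∑ i, p i)).PosDef ∧
    (∀ x : Fin (d - 1) → ℝ,
      x ⬝ᵥ ((multinomialCov ((N : ℝ)⁻¹ • ∑ i, p i))⁻¹ *ᵥ x)
        ≤ x ⬝ᵥ (((N : ℝ)⁻¹ • ∑ i, multinomialCov (p i))⁻¹ *ᵥ x)) ∧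
    (∀ c : ℝ,
      {x : Fin (d - 1) → ℝ |
          x ⬝ᵥ (((N : ℝ)⁻¹ • ∑ i, multinomialCov (p i))⁻¹ *ᵥ x) ≤ c}
        ⊆ {x : Fin (d - 1) → ℝ |
          x ⬝ᵥ ((multinomialCov ((N : ℝ)⁻¹ • ∑ i, p i))⁻¹ *ᵥ x) ≤ c}) :=
  gaussian_contour_inclusion_general d N hN p hpos hsum
end
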